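/- Let a, b, c, d ∈ ℂ with ad − bc ≠ 0, and let φ(z) = (az + b)/(cz + d) be the associated Möbius transformation. Let U ⊆ ℂ be an open set with cz + d ≠ 0 for all z ∈ U, and let v be a smooth positive real-valued function defined on an open set containing φ(U). Define ṽ : U → ℝ by ṽ(z) = v(φ(z))·|φ′(z)|⁻². Then for every z ∈ U, ṽ(z)·(∂³ṽ/∂z³)(z)·(∂³ṽ/∂z̄³)(z) = (v·(∂³v/∂z³)·(∂³v/∂z̄³))(φ(z)); that is, the quantity Q = v·(∂³v/∂z³)·(∂³v/∂z̄³) is invariant under Möbius transformations. -/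

import Mathlib

/- We identify `ℝ²` with `ℂ` via `(x₁,x₂) ↦ z = x₁ + i x₂`. -/

/-- Partial derivative of a complex-valued function in the first Euclidean
coordinate. -/
noncomputable def pdx (f : ℂ → ℂ) (z : ℂ) : ℂ :=
  deriv (fun s : ℝ => f (z + (s : ℂ))) 0

/-- Partial derivative of a complex-valued function in the second Euclidean
coordinate. -/
noncomputable def pdy (f : ℂ → ℂ) (z : ℂ) : ℂ :=
  deriv (fun s : ℝ => f (z + (s : ℂ) * Complex.I)) 0

/-- The Wirtinger derivative `∂f/∂z = (1/2)(∂f/∂x₁ − i ∂f/∂x₂)`. -/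
noncomputable def wz (f : ℂ → ℂ) : ℂ → ℂ :=
  fun z => (pdx f z - Complex.I * pdy f z) / 2

/-- The Wirtinger derivative `∂f/∂z̄ = (1/2)(∂f/∂x₁ + i ∂f/∂x₂)`. -/
noncomputable def wzb (f : ℂ → ℂ) : ℂ → ℂ :=
  fun z => (pdx f z + Complex.I * pdy f z) / 2

/-- The quantity `Q = v · (∂³v/∂z³) · (∂³v/∂z̄³)` associated to a conformal
factor `v : ℝ² → ℝ`. -/
noncomputable def Qstatic (v : ℂ → ℝ) : ℂ → ℂ :=
  fun z => (v z : ℂ)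
    * wz (wz (wz (fun w => (v w : ℂ)))) z
    * wzb (wzb (wzb (fun w => (v w : ℂ)))) z

/-!
Write `P = (cz + d)² / (ad - bc)`, so that `φ' = P⁻¹` and the pulled-back factor is
`ṽ = (v ∘ φ) · P · P̄`. The antiholomorphic factor `P̄` passes through `∂/∂z`, and by the chain rule
`∂(g ∘ φ) = (∂g ∘ φ) · φ'`, applying `∂/∂z` three times to `(v ∘ φ) · P` leaves
`(∂³v ∘ φ) / P²`: all lower-order terms cancel because `P` is the square of an affine function,
i.e. `P''' = 0` and `P'² = 2 P P''` (the case `n = 2` of Bol's lemma). Since `v` is real,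
`∂³v/∂z̄³` is the conjugate of `∂³v/∂z³`, hence `Q_ṽ = (v ∘ φ) · |P|² · |∂³v ∘ φ|² / |P|⁴ · |P|²`
equals `Q_v ∘ φ`.
-/

open Complex ComplexConjugate Filter Topology Set
open scoped ContDiff

lemma HasFDerivAt.hasDerivAt_add_ofReal_mul {f : ℂ → ℂ} {L : ℂ →L[ℝ] ℂ} {z : ℂ}
    (h : HasFDerivAt f L z) (w : ℂ) : HasDerivAt (fun s : ℝ => f (z + s * w)) (L w) 0 := by
  have hline : HasDerivAt (fun s : ℝ => z + s * w) w 0 := by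
    simpa using ((hasDerivAt_id (0 : ℝ)).ofReal_comp.mul_const w).const_add z
  exact (by simpa using h : HasFDerivAt f L (z + ((0 : ℝ) : ℂ) * w)).comp_hasDerivAt 0 hline

lemma HasFDerivAt.wz_eq {f : ℂ → ℂ} {L : ℂ →L[ℝ] ℂ} {z : ℂ} (h : HasFDerivAt f L z) :
    wz f z = (L 1 - I * L I) / 2 := by
  have hx := (h.hasDerivAt_add_ofReal_mul 1).deriv
  have hy := (h.hasDerivAt_add_ofReal_mul I).deriv
  simp only [mul_one] at hx
  simp only [wz, pdx, pdy, hx, hy]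

lemma DifferentiableAt.wz_eq {f : ℂ → ℂ} {z : ℂ} (h : DifferentiableAt ℝ f z) :
    wz f z = (fderiv ℝ f z 1 - I * fderiv ℝ f z I) / 2 :=
  h.hasFDerivAt.wz_eq

lemma Filter.EventuallyEq.wz_eq {f g : ℂ → ℂ} {z : ℂ} (h : f =ᶠ[𝓝 z] g) : wz f z = wz g z := by
  have hline (w : ℂ) : Tendsto (fun s : ℝ => z + s * w) (𝓝 0) (𝓝 z) := by
    simpa using (((continuous_ofReal.mul continuous_const).const_add z).tendsto 0 :
      Tendsto (fun s : ℝ => z + s * w) _ _)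
  have hx := (h.comp_tendsto (by simpa using hline 1)).deriv_eq
  have hy := (h.comp_tendsto (hline I)).deriv_eq
  simp only [wz, pdx, pdy, Function.comp_def] at hx hy ⊢
  rw [hx, hy]

lemma Filter.EventuallyEq.wz {f g : ℂ → ℂ} {z : ℂ} (h : f =ᶠ[𝓝 z] g) : wz f =ᶠ[𝓝 z] wz g :=
  h.eventuallyEq_nhds.mono fun _ => Filter.EventuallyEq.wz_eq

lemma ContDiffOn.wz_of_isOpen {f : ℂ → ℂ} {U : Set ℂ} {m n : WithTop ℕ∞}
    (hf : ContDiffOn ℝ n f U) (hU : IsOpen U) (hmn : m + 1 ≤ n) : ContDiffOn ℝ m (wz f) U := by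
  have hf' := hf.fderiv_of_isOpen hU hmn
  have hL : ContDiffOn ℝ m (fun z => (fderiv ℝ f z 1 - I * fderiv ℝ f z I) / 2) U := by
    fun_prop
  refine hL.congr fun z hz => ?_
  have hn : n ≠ 0 := by rintro rfl; simp at hmn
  exact ((hf.differentiableOn hn z hz).differentiableAt (hU.mem_nhds hz)).wz_eq

lemma ContDiffOn.wz_iterate_of_isOpen {f : ℂ → ℂ} {U : Set ℂ} {n : WithTop ℕ∞} (hU : IsOpen U)
    (k : ℕ) (hf : ContDiffOn ℝ (n + k) f U) : ContDiffOn ℝ n (wz^[k] f) U := by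
  induction k generalizing f with
  | zero => simpa using hf
  | succ k ih =>
    refine ih (hf.wz_of_isOpen hU ?_)
    push_cast
    rw [add_assoc]

lemma wzb_eq_conj_wz_conj (f : ℂ → ℂ) :
    wzb f = fun z => conj (wz (fun w => conj (f w)) z) := by
  funext z
  simp only [wz, wzb, pdx, pdy, ← star_def, deriv.star]
  simp

lemma wzb_iterate_eq_conj (f : ℂ → ℂ) (k : ℕ) :
    wzb^[k] f = fun z => conj (wz^[k] (fun w => conj (f w)) z) := by
  induction k with
  | zero => simp
  | succ k ih => simp [Function.iterate_succ_apply', ih, wzb_eq_conj_wz_conj]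

lemma Qstatic_eq (v : ℂ → ℝ) (z : ℂ) :
    Qstatic v z = v z * wz (wz (wz fun w => (v w : ℂ))) z
      * conj (wz (wz (wz fun w => (v w : ℂ))) z) := by
  have h := congrFun (wzb_iterate_eq_conj (fun w => (v w : ℂ)) 3) z
  simp only [conj_ofReal] at h
  exact congrArg _ h

lemma ContinuousLinearMap.apply_eq_re_add_im (L : ℂ →L[ℝ] ℂ) (w : ℂ) :
    L w = w.re * L 1 + w.im * L I := by
  have hw : w = w.re • (1 : ℂ) + w.im • I := by simp [real_smul]
  rw [hw, map_add, map_smul, map_smul]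
  simp [real_smul]

def HasWzAt (f : ℂ → ℂ) (f' z : ℂ) : Prop :=
  DifferentiableAt ℝ f z ∧ wz f z = f'

section HasWzAt

variable {f g h φ : ℂ → ℂ} {f' g' h' φ' z : ℂ}

lemma DifferentiableAt.hasWzAt (hf : DifferentiableAt ℝ f z) : HasWzAt f (wz f z) z :=
  ⟨hf, rfl⟩

lemma HasWzAt.congr_wz (hf : HasWzAt f f' z) (h : f' = g') : HasWzAt f g' z :=
  h ▸ hf

lemma HasDerivAt.hasWzAt (hf : HasDerivAt f f' z) : HasWzAt f f' z := by
  refine ⟨hf.differentiableAt.restrictScalars ℝ, ?_⟩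
  rw [(hf.hasFDerivAt.restrictScalars ℝ).wz_eq]
  simp only [ContinuousLinearMap.coe_restrictScalars', ContinuousLinearMap.toSpanSingleton_apply,
    smul_eq_mul, one_mul, ← mul_assoc, I_mul_I]
  ring

lemma HasDerivAt.hasWzAt_conj (hh : HasDerivAt h h' z) :
    HasWzAt (fun w => conj (h w)) 0 z := by
  have hL : HasFDerivAt (fun w => conj (h w)) _ z :=
    conjCLE.toContinuousLinearMap.hasFDerivAt.comp z (hh.hasFDerivAt.restrictScalars ℝ)
  refine ⟨hL.differentiableAt, ?_⟩
  rw [hL.wz_eq]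
  simp only [ContinuousLinearMap.comp_apply, ContinuousLinearMap.coe_restrictScalars',
    ContinuousLinearMap.toSpanSingleton_apply, smul_eq_mul, one_mul, ContinuousLinearEquiv.coe_coe,
    ContinuousAlgEquiv.coeCLE_apply, conjCAE_apply, map_mul, conj_I, neg_mul, mul_neg,
    sub_neg_eq_add, ← mul_assoc, I_mul_I]
  ring

lemma HasWzAt.add (hf : HasWzAt f f' z) (hg : HasWzAt g g' z) :
    HasWzAt (fun w => f w + g w) (f' + g') z := by
  refine ⟨hf.1.add hg.1, ?_⟩
  have hL : HasFDerivAt (fun w => f w + g w) _ z := hf.1.hasFDerivAt.add hg.1.hasFDerivAt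
  rw [hL.wz_eq, ← hf.2, ← hg.2, hf.1.wz_eq, hg.1.wz_eq]
  simp only [add_apply]
  ring

lemma HasWzAt.mul (hf : HasWzAt f f' z) (hg : HasWzAt g g' z) :
    HasWzAt (fun w => f w * g w) (f' * g z + f z * g') z := by
  refine ⟨hf.1.mul hg.1, ?_⟩
  have hL : HasFDerivAt (fun w => f w * g w) _ z := hf.1.hasFDerivAt.mul hg.1.hasFDerivAt
  rw [hL.wz_eq, ← hf.2, ← hg.2, hf.1.wz_eq, hg.1.wz_eq]
  simp only [add_apply, smul_apply, smul_eq_mul]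
  ring

lemma HasWzAt.mul_conj (hf : HasWzAt f f' z) (hh : HasDerivAt h h' z) :
    HasWzAt (fun w => f w * conj (h w)) (f' * conj (h z)) z :=
  (hf.mul hh.hasWzAt_conj).congr_wz (by simp)

lemma HasWzAt.comp (hg : HasWzAt g g' (φ z)) (hφ : HasDerivAt φ φ' z) :
    HasWzAt (fun w => g (φ w)) (g' * φ') z := by
  have hφ' := hφ.hasFDerivAt.restrictScalars ℝ
  refine ⟨hg.1.comp z hφ'.differentiableAt, ?_⟩
  have hL : HasFDerivAt (fun w => g (φ w)) _ z := hg.1.hasFDerivAt.comp z hφ'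
  rw [hL.wz_eq, ← hg.2, hg.1.wz_eq]
  simp only [ContinuousLinearMap.coe_comp, Function.comp_apply,
    ContinuousLinearMap.coe_restrictScalars', ContinuousLinearMap.toSpanSingleton_apply,
    smul_eq_mul, one_mul]
  set L := fderiv ℝ g (φ z)
  rw [L.apply_eq_re_add_im φ', L.apply_eq_re_add_im (I * φ')]
  simp only [mul_re, mul_im, I_re, I_im, zero_mul, one_mul, zero_sub, zero_add, ofReal_neg]
  linear_combination (L 1 / 2 - L I * I / 2) * re_add_im φ' + (φ'.im * L I / 2) * I_sq

end HasWzAt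

lemma wz_eqOn_of_hasWzAt {f g g' : ℂ → ℂ} {U : Set ℂ} (hU : IsOpen U) (hfg : EqOn f g U)
    (hg : ∀ z ∈ U, HasWzAt g (g' z) z) : EqOn (wz f) g' U := fun z hz =>
  (hfg.eventuallyEq_of_mem (hU.mem_nhds hz)).wz_eq.trans (hg z hz).2

lemma wz_wz_wz_comp_mul_mul_conj {U V : Set ℂ} {g φ P P₁ : ℂ → ℂ} {p₂ : ℂ} (hU : IsOpen U)
    (hV : IsOpen V) (hg : ContDiffOn ℝ 3 g V) (hφV : MapsTo φ U V)
    (hφ : ∀ z ∈ U, HasDerivAt φ (P z)⁻¹ z) (hP : ∀ z ∈ U, HasDerivAt P (P₁ z) z)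
    (hP₁ : ∀ z ∈ U, HasDerivAt P₁ p₂ z) (hP0 : ∀ z ∈ U, P z ≠ 0)
    (hPP : ∀ z ∈ U, P₁ z ^ 2 = 2 * P z * p₂) :
    EqOn (wz (wz (wz fun w => g (φ w) * P w * conj (P w))))
      (fun z => wz (wz (wz g)) (φ z) / P z ^ 2 * conj (P z)) U := by
  have hd (k : ℕ) (hk : k ≤ 2) {z} (hz : z ∈ U) :
      HasWzAt (wz^[k] g) (wz^[k + 1] g (φ z)) (φ z) := by
    have hgk : ContDiffOn ℝ 1 (wz^[k] g) V :=
      ContDiffOn.wz_iterate_of_isOpen hV k (hg.of_le (by exact_mod_cast (by omega : 1 + k ≤ 3)))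
    rw [Function.iterate_succ_apply']
    exact ((hgk.differentiableOn one_ne_zero).differentiableAt (hV.mem_nhds (hφV hz))).hasWzAt
  have h₁ : EqOn (wz fun w => g (φ w) * P w * conj (P w))
      (fun z => (wz g (φ z) + g (φ z) * P₁ z) * conj (P z)) U :=
    wz_eqOn_of_hasWzAt hU (eqOn_refl _ _) fun z hz =>
      ((((hd 0 (by norm_num) hz).comp (hφ z hz)).mul (hP z hz).hasWzAt).mul_conj (hP z hz)).congr_wz
        (by simp only [Function.iterate_succ_apply', Function.iterate_zero_apply]
            field_simp [hP0 z hz])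
  have h₂ : EqOn (wz (wz fun w => g (φ w) * P w * conj (P w)))
      (fun z => ((wz (wz g) (φ z) + wz g (φ z) * P₁ z) * (P z)⁻¹ + g (φ z) * p₂) * conj (P z)) U :=
    wz_eqOn_of_hasWzAt hU h₁ fun z hz =>
      ((((hd 1 (by norm_num) hz).comp (hφ z hz)).add
        (((hd 0 (by norm_num) hz).comp (hφ z hz)).mul (hP₁ z hz).hasWzAt)).mul_conj
          (hP z hz)).congr_wz
        (by simp only [Function.iterate_succ_apply', Function.iterate_zero_apply]; ring)
  refine wz_eqOn_of_hasWzAt hU h₂ fun z hz => ?_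
  refine ((((((hd 2 le_rfl hz).comp (hφ z hz)).add
    (((hd 1 (by norm_num) hz).comp (hφ z hz)).mul (hP₁ z hz).hasWzAt)).mul
      ((hP z hz).inv (hP0 z hz)).hasWzAt).add
        (((hd 0 (by norm_num) hz).comp (hφ z hz)).mul (hasDerivAt_const z p₂).hasWzAt)).mul_conj
          (hP z hz)).congr_wz ?_
  simp only [Function.iterate_succ_apply', Function.iterate_zero_apply, Pi.inv_apply]
  field_simp [hP0 z hz]
  linear_combination -wz g (φ z) * hPP z hz

lemma hasDerivAt_moebius {a b c d z : ℂ} (hz : c * z + d ≠ 0) :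
    HasDerivAt (fun w => (a * w + b) / (c * w + d)) ((c * z + d) ^ 2 / (a * d - b * c))⁻¹ z := by
  have hN : HasDerivAt (fun w => c * w + d) c z := by
    simpa using ((hasDerivAt_id z).const_mul c).add_const d
  have hM : HasDerivAt (fun w => a * w + b) a z := by
    simpa using ((hasDerivAt_id z).const_mul a).add_const b
  refine (hM.div hN hz).congr_deriv ?_
  field_simp
  ring

lemma ofReal_inv_norm_inv_sq (z : ℂ) : (((‖z⁻¹‖ ^ 2)⁻¹ : ℝ) : ℂ) = z * conj z := by
  rw [norm_inv, inv_pow, inv_inv, mul_conj']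
  push_cast
  ring

theorem Q_moebius_invariant_general (a b c d : ℂ) (h_det : a * d - b * c ≠ 0)
    (U : Set ℂ) (hU : IsOpen U) (h_den : ∀ z ∈ U, c * z + d ≠ 0)
    (φ : ℂ → ℂ) (hφ : φ = fun z => (a * z + b) / (c * z + d))
    (V : Set ℂ) (hV : IsOpen V) (hUV : φ '' U ⊆ V)
    (v : ℂ → ℝ) (hv_smooth : ContDiffOn ℝ (⊤ : ℕ∞) v V)
    (vt : ℂ → ℝ)
    (hvt : ∀ z ∈ U, vt z = v (φ z) * (‖deriv φ z‖ ^ 2)⁻¹) :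
    ∀ z ∈ U, Qstatic vt z = Qstatic v (φ z) := by
  set P : ℂ → ℂ := fun w => (c * w + d) ^ 2 / (a * d - b * c)
  have hP0 (w) (hw : w ∈ U) : P w ≠ 0 := by simp [P, h_den w hw, h_det]
  have hφ' (w) (hw : w ∈ U) : HasDerivAt φ (P w)⁻¹ w := hφ ▸ hasDerivAt_moebius (h_den w hw)
  have hP (w) : HasDerivAt P (2 * (c * w + d) * c / (a * d - b * c)) w := by
    simpa using (((hasDerivAt_id w).const_mul c).add_const d).pow 2 |>.div_const (a * d - b * c)
  have hP₁ (w) : HasDerivAt (fun w => 2 * (c * w + d) * c / (a * d - b * c))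
      (2 * c * c / (a * d - b * c)) w := by
    simpa using ((((hasDerivAt_id w).const_mul c).add_const d).const_mul 2).mul_const c
      |>.div_const (a * d - b * c)
  have hvt' : EqOn (fun w => (vt w : ℂ)) (fun w => (v (φ w) : ℂ) * P w * conj (P w)) U :=
    fun w hw => by
      simp only [hvt w hw, (hφ' w hw).deriv, ofReal_mul, ofReal_inv_norm_inv_sq]
      ring
  have hg : ContDiffOn ℝ 3 (fun w => (v w : ℂ)) V :=
    ofRealCLM.contDiff.comp_contDiffOn (hv_smooth.of_le (by norm_cast))
  have h₃ := wz_wz_wz_comp_mul_mul_conj hU hV hg (fun w hw => hUV (mem_image_of_mem φ hw))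
    hφ' (fun w _ => hP w) (fun w _ => hP₁ w) hP0 (fun w _ => by simp only [P]; field_simp)
  intro z hz
  rw [Qstatic_eq, Qstatic_eq, (hvt'.eventuallyEq_of_mem (hU.mem_nhds hz)).wz.wz.wz_eq, h₃ hz,
    show (vt z : ℂ) = _ from hvt' hz]
  have hP0' : conj (P z) ≠ 0 := (map_ne_zero _).2 (hP0 z hz)
  simp only [map_mul, map_div₀, map_pow, conj_conj]
  field_simp [hP0 z hz]

/-- Möbius invariance of `Q = v·(∂³v/∂z³)·(∂³v/∂z̄³)`:
for a Möbius transformation `φ(z) = (az+b)/(cz+d)` with `ad − bc ≠ 0`, an open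
set `U` on which `cz + d ≠ 0`, and a smooth positive conformal factor `v` on an
open set `V` containing `φ(U)`, the pulled-back conformal factor
`ṽ(z) = v(φ(z))·|φ′(z)|⁻²` satisfies `Q_{ṽ}(z) = Q_v(φ(z))` for all `z ∈ U`. -/
theorem Q_moebius_invariant (a b c d : ℂ) (h_det : a * d - b * c ≠ 0)
    (U : Set ℂ) (hU : IsOpen U) (h_den : ∀ z ∈ U, c * z + d ≠ 0)
    (φ : ℂ → ℂ) (hφ : φ = fun z => (a * z + b) / (c * z + d))
    (V : Set ℂ) (hV : IsOpen V) (hUV : φ '' U ⊆ V)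
    (v : ℂ → ℝ) (hv_smooth : ContDiffOn ℝ (⊤ : ℕ∞) v V)
    (hv_pos : ∀ w ∈ V, 0 < v w)
    (vt : ℂ → ℝ)
    (hvt : ∀ z ∈ U, vt z = v (φ z) * (‖deriv φ z‖ ^ 2)⁻¹) :
    ∀ z ∈ U, Qstatic vt z = Qstatic v (φ z) :=
  Q_moebius_invariant_general a b c d h_det U hU h_den φ hφ V hV hUV v hv_smooth vt hvt
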